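/- In the group ring ℤB_∞, the braid shuffle elements satisfy both Pascal-type recurrences: Ш_{m,n} = Ш_{m-1,n} + Ш_{m,n-1}·σ_{m+n-1}···σ_n and Ш_{m,n} = (Ш_{m,n-1})^{↑1} + (Ш_{m-1,n})^{↑1}·σ_1···σ_n, for m,n ≥ 1, where one recurrence is taken as the definition. -/

import Mathlib

/-! The braid group `B_∞` (inductive limit of the Artin braid groups), its integral
group ring, the shift endomorphism `↑m`, and the braid shuffle elements `Ш_{m,n}`.
The generator `br i` represents the Artin generator `σ_{i+1}`. -/

/-- Relators of the Artin presentation of `B_∞`. -/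
def braidRels : Set (FreeGroup ℕ) :=
  {r | (∃ i : ℕ, r = .of i * .of (i + 1) * .of i * (.of (i + 1) * .of i * .of (i + 1))⁻¹) ∨
       (∃ i j : ℕ, i + 2 ≤ j ∧ r = .of i * .of j * (.of j * .of i)⁻¹)}

/-- The braid group `B_∞`. -/
abbrev BraidInf : Type := PresentedGroup braidRels

/-- The Artin generator `σ_{i+1}` of `B_∞`. -/
def br (i : ℕ) : BraidInf := PresentedGroup.of i

lemma braidRels_mk_eq_one {r : FreeGroup ℕ} (h : r ∈ braidRels) :
    PresentedGroup.mk braidRels r = 1 :=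
  (QuotientGroup.eq_one_iff r).mpr (Subgroup.subset_normalClosure h)

lemma br_braid (i : ℕ) : br i * br (i + 1) * br i = br (i + 1) * br i * br (i + 1) := by
  have h := braidRels_mk_eq_one (Or.inl ⟨i, rfl⟩)
  rw [map_mul, map_mul, map_inv, map_mul, map_mul, mul_inv_eq_one] at h
  exact h

lemma br_comm {i j : ℕ} (hij : i + 2 ≤ j) : br i * br j = br j * br i := by
  have h := braidRels_mk_eq_one (Or.inr ⟨i, j, hij, rfl⟩)
  rw [map_mul, map_inv, map_mul, mul_inv_eq_one] at h
  exact h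

/-- The shift endomorphism of `B_∞`, sending `σ_i` to `σ_{i+m}`. -/
noncomputable def braidShift (m : ℕ) : BraidInf →* BraidInf :=
  PresentedGroup.toGroup (f := fun i => br (i + m)) (by
    rintro r (⟨i, rfl⟩ | ⟨i, j, hij, rfl⟩) <;>
      simp only [map_mul, map_inv, FreeGroup.lift_apply_of, mul_inv_eq_one]
    · rw [show i + 1 + m = i + m + 1 from by omega]
      exact br_braid (i + m)
    · exact br_comm (by omega))

/-- The descending word `σ_{b+k+1} σ_{b+k} ⋯ σ_{b+1}` (in 1-based notation):
`br (b+k) * br (b+k-1) * ⋯ * br b`. -/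
def descWord : ℕ → ℕ → BraidInf
  | 0, b => br b
  | k + 1, b => br (b + k + 1) * descWord k b

/-- The braid shuffle elements `Ш_{m,n} ∈ ℤB_∞`, defined by the Pascal-type recurrence
`Ш_{m,n} = Ш_{m-1,n} + Ш_{m,n-1}·σ_{m+n-1}⋯σ_n` with `Ш_{0,n} = Ш_{n,0} = 1`. -/
noncomputable def Sha : ℕ → ℕ → MonoidAlgebra ℤ BraidInf
  | 0, _ => 1
  | _ + 1, 0 => 1
  | m + 1, n + 1 =>
      Sha m (n + 1) + Sha (m + 1) n * MonoidAlgebra.of ℤ BraidInf (descWord m n)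

/-- The shift `↑m` on the group ring `ℤB_∞`. -/
noncomputable def ringShift (m : ℕ) :
    MonoidAlgebra ℤ BraidInf →+* MonoidAlgebra ℤ BraidInf :=
  MonoidAlgebra.mapDomainRingHom ℤ (braidShift m)


/-- The ascending word `σ_1 σ_2 ⋯ σ_{k+1}` (1-based): `br 0 * br 1 * ⋯ * br k`. -/
def ascWord : ℕ → BraidInf
  | 0 => br 0
  | k + 1 => ascWord k * br (k + 1)

lemma braidShift_br (m i : ℕ) : braidShift m (br i) = br (i + m) := by
  simp [braidShift, br, PresentedGroup.toGroup.of]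

lemma braidShift_descWord (k b : ℕ) :
    braidShift 1 (descWord k b) = descWord k (b + 1) := by
  induction k with
  | zero => simp [descWord, braidShift_br]
  | succ k ih =>
      simp only [descWord, map_mul, braidShift_br, ih]
      congr 2
      omega

lemma ringShift_of (t : ℕ) (g : BraidInf) :
    ringShift t (MonoidAlgebra.of ℤ BraidInf g) =
      MonoidAlgebra.of ℤ BraidInf (braidShift t g) := by
  simp [ringShift, MonoidAlgebra.mapDomainRingHom, MonoidAlgebra.of_apply,
    Finsupp.mapDomain_single]

lemma desc_succ (k b : ℕ) : descWord (k + 1) b = descWord k (b + 1) * br b := by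
  induction k with
  | zero => simp [descWord, mul_assoc]
  | succ k ih =>
      show br (b + k + 2) * descWord (k + 1) b = _
      rw [ih]
      show _ = br (b + 1 + k + 1) * descWord k (b + 1) * br b
      rw [show b + 1 + k + 1 = b + k + 2 from by omega, mul_assoc]

lemma br_comm_desc {i b : ℕ} (k : ℕ) (h : i + 2 ≤ b) :
    br i * descWord k b = descWord k b * br i := by
  induction k with
  | zero => exact br_comm h
  | succ k ih =>
      show br i * (br (b + k + 1) * descWord k b) = br (b + k + 1) * descWord k b * br i
      rw [← mul_assoc, br_comm (show i + 2 ≤ b + k + 1 from by omega), mul_assoc, ih,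
        mul_assoc]

lemma asc_comm_desc {n b : ℕ} (k : ℕ) (h : n + 2 ≤ b) :
    ascWord n * descWord k b = descWord k b * ascWord n := by
  induction n with
  | zero => exact br_comm_desc k h
  | succ n ih =>
      show ascWord n * br (n + 1) * descWord k b = descWord k b * (ascWord n * br (n + 1))
      rw [mul_assoc, br_comm_desc k (by omega), ← mul_assoc, ih (by omega), mul_assoc]

lemma key_group (m n : ℕ) :
    ascWord n * descWord (m + 1) (n + 1) = descWord m (n + 2) * ascWord (n + 1) := by
  rw [desc_succ, ← mul_assoc, asc_comm_desc m (by omega), mul_assoc]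
  rfl

lemma sha_rec (m n : ℕ) :
    Sha (m + 1) (n + 1) =
      Sha m (n + 1) + Sha (m + 1) n * MonoidAlgebra.of ℤ BraidInf (descWord m n) := by
  rw [Sha]

lemma sha_zero_left (n : ℕ) : Sha 0 n = 1 := by rw [Sha]

lemma sha_zero_right (m : ℕ) : Sha (m + 1) 0 = 1 := by rw [Sha]

lemma sha_second : ∀ m n : ℕ,
    Sha (m + 1) (n + 1) =
      ringShift 1 (Sha (m + 1) n) +
        ringShift 1 (Sha m (n + 1)) * MonoidAlgebra.of ℤ BraidInf (ascWord n) := by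
  intro m
  induction m with
  | zero =>
      intro n
      induction n with
      | zero =>
          rw [sha_rec, sha_zero_left, sha_zero_right, map_one]
          rfl
      | succ n ih =>
          rw [sha_rec, sha_zero_left,
            show ringShift 1 (Sha (0 + 1) (n + 1)) =
              ringShift 1 (Sha 0 (n + 1)) + ringShift 1 (Sha (0 + 1) n) *
                MonoidAlgebra.of ℤ BraidInf (descWord 0 (n + 1)) from by
              rw [sha_rec, map_add, map_mul, ringShift_of, braidShift_descWord],
            ih, sha_zero_left, map_one,
            show descWord 0 (n + 1) = br (n + 1) from rfl,
            show ascWord (n + 1) = ascWord n * br (n + 1) from rfl, map_mul]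
          noncomm_ring
  | succ m ihm =>
      intro n
      induction n with
      | zero =>
          rw [sha_rec, sha_zero_right, one_mul,
            show ringShift 1 (Sha (m + 1) (0 + 1)) =
              ringShift 1 (Sha m (0 + 1)) +
                ringShift 1 (Sha (m + 1) 0) *
                  MonoidAlgebra.of ℤ BraidInf (descWord m 1) from by
              rw [sha_rec, map_add, map_mul, ringShift_of, braidShift_descWord],
            ihm 0, sha_zero_right, map_one, desc_succ m 0, map_mul,
            show ascWord 0 = br 0 from rfl]
          noncomm_ring
      | succ n ihn =>
          rw [sha_rec,
            show ringShift 1 (Sha (m + 1 + 1) (n + 1)) =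
              ringShift 1 (Sha (m + 1) (n + 1)) +
                ringShift 1 (Sha (m + 1 + 1) n) *
                  MonoidAlgebra.of ℤ BraidInf (descWord (m + 1) (n + 1)) from by
              rw [sha_rec, map_add, map_mul, ringShift_of, braidShift_descWord],
            show ringShift 1 (Sha (m + 1) (n + 1 + 1)) =
              ringShift 1 (Sha m (n + 1 + 1)) +
                ringShift 1 (Sha (m + 1) (n + 1)) *
                  MonoidAlgebra.of ℤ BraidInf (descWord m (n + 2)) from by
              rw [sha_rec, map_add, map_mul, ringShift_of, braidShift_descWord],
            ihm (n + 1), ihn]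
          have key : MonoidAlgebra.of ℤ BraidInf (ascWord n) *
                MonoidAlgebra.of ℤ BraidInf (descWord (m + 1) (n + 1)) =
              MonoidAlgebra.of ℤ BraidInf (descWord m (n + 2)) *
                MonoidAlgebra.of ℤ BraidInf (ascWord (n + 1)) := by
            rw [← map_mul, ← map_mul, key_group]
          calc ringShift 1 (Sha (m + 1) (n + 1)) +
              ringShift 1 (Sha m (n + 1 + 1)) * MonoidAlgebra.of ℤ BraidInf (ascWord (n + 1)) +
              (ringShift 1 (Sha (m + 1 + 1) n) +
                ringShift 1 (Sha (m + 1) (n + 1)) * MonoidAlgebra.of ℤ BraidInf (ascWord n)) *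
                MonoidAlgebra.of ℤ BraidInf (descWord (m + 1) (n + 1))
              = ringShift 1 (Sha (m + 1) (n + 1)) +
                ringShift 1 (Sha (m + 1 + 1) n) *
                  MonoidAlgebra.of ℤ BraidInf (descWord (m + 1) (n + 1)) +
                (ringShift 1 (Sha m (n + 1 + 1)) *
                    MonoidAlgebra.of ℤ BraidInf (ascWord (n + 1)) +
                  ringShift 1 (Sha (m + 1) (n + 1)) *
                    (MonoidAlgebra.of ℤ BraidInf (ascWord n) *
                      MonoidAlgebra.of ℤ BraidInf (descWord (m + 1) (n + 1)))) := by noncomm_ring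
            _ = _ := by rw [key]; noncomm_ring

/-- the shuffle elements (defined by the first Pascal-type recurrence
`Ш_{m,n} = Ш_{m-1,n} + Ш_{m,n-1}·σ_{m+n-1}⋯σ_n`, `Ш_{0,n} = Ш_{n,0} = 1`) also satisfy
the second Pascal-type recurrence `Ш_{m,n} = (Ш_{m,n-1})^{↑1} + (Ш_{m-1,n})^{↑1}·σ_1⋯σ_n`
for all `m, n ≥ 1`. -/
theorem stmt_6 (m n : ℕ) :
    (Sha (m + 1) (n + 1) =
        Sha m (n + 1) + Sha (m + 1) n * MonoidAlgebra.of ℤ BraidInf (descWord m n)) ∧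
    Sha (m + 1) (n + 1) =
        ringShift 1 (Sha (m + 1) n) +
          ringShift 1 (Sha m (n + 1)) * MonoidAlgebra.of ℤ BraidInf (ascWord n) := by
  exact ⟨sha_rec m n, sha_second m n⟩
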